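/- Let ζ and λ be nonzero real numbers and L ≥ 1. Writing Q(ζ) for the supercharge with parameter ζ, the conjugation relations M(λ) Q(λ⁻²ζ) = Q(ζ) M(λ) and M(λ⁻¹) Q(λ⁻²ζ)† = Q(ζ)† M(λ⁻¹) hold, where on each side M(λ) acts on the appropriate space (V^L on the right of Q and V^{L+1} on its left in the first relation, and conversely in the second). -/

import Mathlib

open scoped BigOperators

noncomputable section

namespace EightVertex

/-- Spin configurations of a chain of length `L`: `0` is spin up, `1` is spin down. -/
abbrev Cfg (L : ℕ) := Fin L → Fin 2

/-- The Hilbert space `V^L = (ℂ²)^{⊗L}`, with its canonical orthonormal basis indexed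
by spin configurations and the standard Hermitian inner product (conjugate-linear in
the first argument). -/
abbrev V (L : ℕ) := EuclideanSpace ℂ (Cfg L)

/-- The canonical basis state `|s₁ ⋯ s_L⟩`. -/
def bs {L : ℕ} (s : Cfg L) : V L := EuclideanSpace.single s 1

/-- The all-spins-up basis state `|↑⋯↑⟩`. -/
def allUp (L : ℕ) : V L := bs (fun _ => 0)

/-- Cyclic successor on `Fin L`. -/
def cyc {L : ℕ} (j : Fin L) : Fin L := ⟨((j : ℕ) + 1) % L, Nat.mod_lt _ j.pos⟩

/-- Matrix of the translation operator `S`: `S|s₁⋯s_L⟩ = |s_L s₁ ⋯ s_{L-1}⟩`. -/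
def Smat (L : ℕ) : Matrix (Cfg L) (Cfg L) ℂ :=
  fun s' s => if (∀ j, s' (cyc j) = s j) then 1 else 0

/-- The translation operator `S` on `V^L`. -/
def Sop (L : ℕ) : V L →ₗ[ℂ] V L := Matrix.toEuclideanLin (Smat L)

/-- The subspace `W^L ⊆ V^L` of alternate-cyclic states: the eigenspace of the
translation operator with eigenvalue `(-1)^{L+1}`. -/
def W (L : ℕ) : Submodule ℂ (V L) :=
  Module.End.eigenspace (Sop L : Module.End ℂ (V L)) ((-1 : ℂ) ^ (L + 1))

def sigmaX : Matrix (Fin 2) (Fin 2) ℂ := !![0, 1; 1, 0]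
def sigmaY : Matrix (Fin 2) (Fin 2) ℂ := !![0, -Complex.I; Complex.I, 0]
def sigmaZ : Matrix (Fin 2) (Fin 2) ℂ := !![1, 0; 0, -1]

/-- The one-site operator `A_j` acting on site `j` of the chain. -/
def site {L : ℕ} (A : Matrix (Fin 2) (Fin 2) ℂ) (j : Fin L) : Matrix (Cfg L) (Cfg L) ℂ :=
  fun s' s => A (s' j) (s j) * ∏ k ∈ Finset.univ.erase j, (if s' k = s k then (1 : ℂ) else 0)

/-- Matrix of the periodic XYZ Hamiltonian
`H = -(1/2) ∑_j (Jx σ^x_j σ^x_{j+1} + Jy σ^y_j σ^y_{j+1} + Jz σ^z_j σ^z_{j+1})`. -/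
def HxyzMat (Jx Jy Jz : ℝ) (L : ℕ) : Matrix (Cfg L) (Cfg L) ℂ :=
  (-(1/2) : ℂ) • ∑ j : Fin L,
    ((Jx : ℂ) • (site sigmaX j * site sigmaX (cyc j)) +
     (Jy : ℂ) • (site sigmaY j * site sigmaY (cyc j)) +
     (Jz : ℂ) • (site sigmaZ j * site sigmaZ (cyc j)))

/-- The periodic XYZ Hamiltonian on `V^L`. -/
def Hxyz (Jx Jy Jz : ℝ) (L : ℕ) : V L →ₗ[ℂ] V L := Matrix.toEuclideanLin (HxyzMat Jx Jy Jz L)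

/-- The XYZ Hamiltonian with the supersymmetric anisotropy parameters
`Jx = 1+ζ`, `Jy = 1-ζ`, `Jz = (ζ²-1)/2`. -/
def HxyzSusy (ζ : ℝ) (L : ℕ) : V L →ₗ[ℂ] V L :=
  Hxyz (1 + ζ) (1 - ζ) ((ζ ^ 2 - 1) / 2) L

/-- The ground-state energy `E₀ = -(2n+1)(3+ζ²)/4`. -/
def E0 (n : ℕ) (ζ : ℝ) : ℝ := -(2 * (n : ℝ) + 1) * (3 + ζ ^ 2) / 4

/-- Matrix of the spin-parity operator `P = (-1)^L σ^z_1 ⋯ σ^z_L`. -/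
def Pmat (L : ℕ) : Matrix (Cfg L) (Cfg L) ℂ :=
  fun s' s => if s' = s then (-1 : ℂ) ^ L * ∏ j, (if s j = 0 then (1 : ℂ) else -1) else 0

/-- The spin-parity operator `P` on `V^L`. -/
def Pop (L : ℕ) : V L →ₗ[ℂ] V L := Matrix.toEuclideanLin (Pmat L)

/-- Spin flip on a single site. -/
def flip : Fin 2 → Fin 2 := fun x => if x = 0 then 1 else 0

/-- Matrix of the spin-reversal operator `R = σ^x_1 ⋯ σ^x_L`. -/
def Rrevmat (L : ℕ) : Matrix (Cfg L) (Cfg L) ℂ :=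
  fun s' s => if (∀ j, s' j = flip (s j)) then 1 else 0

/-- The spin-reversal operator `R` on `V^L`. -/
def Rrev (L : ℕ) : V L →ₗ[ℂ] V L := Matrix.toEuclideanLin (Rrevmat L)

/-- Entries of the eight-vertex `R`-matrix with weights `a,b,c,d`.  In each pair the
first component is the auxiliary-space index, the second one the physical index;
the first argument is the outgoing pair, the second the incoming pair.  In the
ordered basis `↑↑, ↑↓, ↓↑, ↓↓` its rows are `(a,0,0,d), (0,b,c,0), (0,c,b,0), (d,0,0,a)`. -/
def Rv (a b c d : ℂ) : Fin 2 × Fin 2 → Fin 2 × Fin 2 → ℂ := fun o i =>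
  if o = i then (if o.1 = o.2 then a else b)
  else if o.1 = i.2 ∧ o.2 = i.1 ∧ i.1 ≠ i.2 then c
  else if o.1 = o.2 ∧ i.1 = i.2 ∧ o.1 ≠ i.1 then d
  else 0

/-- Matrix of the transfer matrix `T = tr₀(R₀L ⋯ R₀1)` of the eight-vertex model. -/
def Tmat (a b c d : ℂ) (L : ℕ) : Matrix (Cfg L) (Cfg L) ℂ :=
  fun s' s => ∑ t : Cfg L, ∏ j : Fin L, Rv a b c d (t (cyc j), s' j) (t j, s j)

/-- The transfer matrix `T` of the eight-vertex model on `V^L`. -/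
def Top (a b c d : ℂ) (L : ℕ) : V L →ₗ[ℂ] V L := Matrix.toEuclideanLin (Tmat a b c d L)

/-- Entries of the local supercharge `q(ζ) : ℂ² → ℂ² ⊗ ℂ²`, `q|↑⟩ = 0`,
`q|↓⟩ = |↑↑⟩ - ζ|↓↓⟩`; arguments: incoming spin, the two outgoing spins. -/
def qloc (ζ : ℂ) (si o1 o2 : Fin 2) : ℂ :=
  if si = 1 then
    (if o1 = 0 ∧ o2 = 0 then 1 else if o1 = 1 ∧ o2 = 1 then -ζ else 0)
  else 0

/-- Position of site `k` of the original chain after insertion of one site at `j`. -/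
def insIdx {L : ℕ} (j k : Fin L) : Fin (L + 1) :=
  if (k : ℕ) < (j : ℕ) then k.castSucc else k.succ

/-- Matrix of the local supercharge `q_j : V^L → V^{L+1}` acting on the `j`-th site
(`j : Fin L` corresponds to the paper's `j+1 ∈ {1,…,L}`). -/
def qjMat (ζ : ℂ) {L : ℕ} (j : Fin L) : Matrix (Cfg (L + 1)) (Cfg L) ℂ :=
  fun s' s => qloc ζ (s j) (s' j.castSucc) (s' j.succ) *
    ∏ k ∈ Finset.univ.erase j, (if s' (insIdx j k) = s k then (1 : ℂ) else 0)

/-- Matrix of `∑_{j=0}^{L} (-1)^j q_j`, where `q_0 = S q_L`. -/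
def QsumMat (ζ : ℂ) : (L : ℕ) → Matrix (Cfg (L + 1)) (Cfg L) ℂ
  | 0 => 0
  | (M + 1) =>
      Smat (M + 2) * qjMat ζ (Fin.last M) +
      ∑ j : Fin (M + 1), ((-1 : ℂ) ^ ((j : ℕ) + 1)) • qjMat ζ j

/-- The supercharge `Q(ζ) : V^L → V^{L+1}`: it acts as
`√(L/(L+1)) ∑_{j=0}^L (-1)^j q_j` on the alternate-cyclic subspace `W^L` and as zero
on the other eigenspaces of the translation operator (equivalently, on the orthogonal
complement of `W^L`, since `S` is unitary). -/
def Qsc (ζ : ℝ) (L : ℕ) : V L →ₗ[ℂ] V (L + 1) :=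
  (Real.sqrt ((L : ℝ) / ((L : ℝ) + 1)) : ℂ) •
    ((Matrix.toEuclideanLin (QsumMat (ζ : ℂ) L)) ∘ₗ
      ((W L).subtype ∘ₗ (Submodule.orthogonalProjection (W L)).toLinearMap))

/-- The adjoint supercharge `Q(ζ)† : V^L → V^{L-1}`. -/
def Qadj (ζ : ℝ) : (L : ℕ) → (V L →ₗ[ℂ] V (L - 1))
  | 0 => 0
  | (K + 1) => LinearMap.adjoint (Qsc ζ K)

/-- Number of down spins of a configuration. -/
def nDown {L : ℕ} (s : Cfg L) : ℕ := (Finset.univ.filter fun j => s j = 1).card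

/-- The state `Φ_n(ζ) = ∑_{m=0}^{n} ζ^m ∑_{x₁<⋯<x_{2m+1}} ||x₁,…,x_{2m+1}⟩⟩`. -/
def Phi (ζ : ℝ) (n : ℕ) : V (2 * n + 1) :=
  ∑ s : Cfg (2 * n + 1),
    (if nDown s % 2 = 1 then ((ζ : ℂ) ^ (nDown s / 2)) else 0) • bs s

/-- The state `Φ̄_n(ζ) = ∑_{m=0}^{n} ζ^m ∑_{x₁<⋯<x_{2m}} ||x₁,…,x_{2m}⟩⟩`. -/
def PhiBar (ζ : ℝ) (n : ℕ) : V (2 * n + 1) :=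
  ∑ s : Cfg (2 * n + 1),
    (if nDown s % 2 = 0 then ((ζ : ℂ) ^ (nDown s / 2)) else 0) • bs s

/-- Matrix of the operator `M(λ) = m₁(λ) ⋯ m_L(λ)`, where `m(λ)|↑⟩ = λ|↑⟩`,
`m(λ)|↓⟩ = λ²|↓⟩`. -/
def Mmat (lam : ℂ) (L : ℕ) : Matrix (Cfg L) (Cfg L) ℂ :=
  fun s' s => if s' = s then ∏ j, (if s j = 0 then lam else lam ^ 2) else 0

/-- The operator `M(λ)` on `V^L`. -/
def Mop (lam : ℂ) (L : ℕ) : V L →ₗ[ℂ] V L := Matrix.toEuclideanLin (Mmat lam L)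

/-!
On each site `m(λ)` is diagonal, and on `|↓⟩` both `(m ⊗ m) q(λ⁻²ζ)` and `q(ζ) m` give
`λ²|↑↑⟩ - λ²ζ|↓↓⟩`, so `m ⊗ m ∘ q(λ⁻²ζ) = q(ζ) ∘ m`. This intertwines every `q_j`, and `M(λ)`
commutes with the translation `S` because its weight `∏ⱼ m(λ)_{sⱼ}` is permutation invariant.
For real `λ`, `M(λ)` is self-adjoint and preserves the eigenspace `W^L` of `S`, hence commutes
with the orthogonal projection onto `W^L`; this gives the first relation. The second is the
adjoint of the first, taken with `λ⁻¹` in place of `λ`.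
-/

theorem _root_.LinearMap.IsSymmetric.comp_starProjection {𝕜 E : Type*} [RCLike 𝕜]
    [NormedAddCommGroup E] [InnerProductSpace 𝕜 E] {T : Module.End 𝕜 E} (hT : T.IsSymmetric)
    {K : Submodule 𝕜 E} [K.HasOrthogonalProjection] (hK : K ∈ T.invtSubmodule) :
    T ∘ₗ (K.starProjection : E →ₗ[𝕜] E) = (K.starProjection : E →ₗ[𝕜] E) ∘ₗ T := by
  ext1 x
  symm
  refine K.eq_starProjection_of_mem_orthogonal (hK (K.starProjection_apply_mem x)) ?_
  rw [LinearMap.comp_apply, ContinuousLinearMap.coe_coe, ← map_sub]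
  exact hT.orthogonalComplement_mem_invtSubmodule hK (K.sub_starProjection_mem_orthogonal x)

lemma cyc_bijective (L : ℕ) : Function.Bijective (cyc (L := L)) := by
  cases L with
  | zero => exact ⟨fun a => a.elim0, fun b => b.elim0⟩
  | succ n =>
    convert (finRotate (n + 1)).bijective
    ext j
    simp [cyc, Fin.val_add]

lemma insIdx_eq_succAbove {L : ℕ} (j k : Fin L) : insIdx j k = j.castSucc.succAbove k := by
  simp only [insIdx, Fin.succAbove, Fin.lt_def, Fin.val_castSucc]

lemma prod_univ_eq_mul_prod_insIdx {M : Type*} [CommMonoid M] {L : ℕ} (j : Fin L)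
    (f : Fin (L + 1) → M) :
    ∏ i, f i = f j.castSucc * f j.succ * ∏ k ∈ Finset.univ.erase j, f (insIdx j k) := by
  rw [Fin.prod_univ_succAbove f j.castSucc, ← Finset.mul_prod_erase _ _ (Finset.mem_univ j),
    Fin.succAbove_castSucc_self, mul_assoc]
  simp only [insIdx_eq_succAbove]

def mWeight (lam : ℂ) (a : Fin 2) : ℂ := if a = 0 then lam else lam ^ 2

lemma Mmat_eq_diagonal (lam : ℂ) (L : ℕ) :
    Mmat lam L = Matrix.diagonal fun s : Cfg L => ∏ j, mWeight lam (s j) := by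
  ext s' s
  by_cases h : s' = s <;> simp [Mmat, Matrix.diagonal, mWeight, h]

lemma mWeight_mul_mWeight_mul_qloc {lam ζ ζ' : ℂ} (hz : ζ = ζ' * lam ^ 2) (a o₁ o₂ : Fin 2) :
    mWeight lam o₁ * mWeight lam o₂ * qloc ζ' a o₁ o₂ = qloc ζ a o₁ o₂ * mWeight lam a := by
  subst hz
  fin_cases a <;> fin_cases o₁ <;> fin_cases o₂ <;> simp [mWeight, qloc] <;> ring

lemma Mmat_mul_qjMat {lam ζ ζ' : ℂ} (hz : ζ = ζ' * lam ^ 2) {L : ℕ} (j : Fin L) :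
    Mmat lam (L + 1) * qjMat ζ' j = qjMat ζ j * Mmat lam L := by
  ext s' s
  simp only [Mmat_eq_diagonal, Matrix.diagonal_mul, Matrix.mul_diagonal, qjMat]
  by_cases hins : ∀ k ∈ Finset.univ.erase j, s' (insIdx j k) = s k
  · have hrest : ∏ k ∈ Finset.univ.erase j, mWeight lam (s' (insIdx j k)) =
        ∏ k ∈ Finset.univ.erase j, mWeight lam (s k) :=
      Finset.prod_congr rfl fun k hk => by rw [hins k hk]
    rw [prod_univ_eq_mul_prod_insIdx j (fun i => mWeight lam (s' i)), hrest,
      ← Finset.mul_prod_erase _ (fun k => mWeight lam (s k)) (Finset.mem_univ j)]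
    linear_combination (∏ k ∈ Finset.univ.erase j, mWeight lam (s k)) *
      (∏ k ∈ Finset.univ.erase j, if s' (insIdx j k) = s k then (1 : ℂ) else 0) *
      mWeight_mul_mWeight_mul_qloc hz (s j) (s' j.castSucc) (s' j.succ)
  · push Not at hins
    obtain ⟨k, hk, hne⟩ := hins
    rw [Finset.prod_eq_zero hk (if_neg hne)]
    ring

lemma Mmat_mul_Smat (lam : ℂ) (L : ℕ) : Mmat lam L * Smat L = Smat L * Mmat lam L := by
  ext s' s
  simp only [Mmat_eq_diagonal, Matrix.diagonal_mul, Matrix.mul_diagonal, Smat]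
  split_ifs with h
  · rw [mul_one, one_mul, ← (cyc_bijective L).prod_comp]
    simp only [h]
  · simp

lemma Mmat_mul_QsumMat {lam ζ ζ' : ℂ} (hz : ζ = ζ' * lam ^ 2) (L : ℕ) :
    Mmat lam (L + 1) * QsumMat ζ' L = QsumMat ζ L * Mmat lam L := by
  cases L with
  | zero => simp [QsumMat]
  | succ M =>
    simp only [QsumMat, Matrix.mul_add, Matrix.add_mul, Matrix.mul_sum, Matrix.sum_mul,
      Matrix.mul_smul, Matrix.smul_mul, Mmat_mul_qjMat hz, ← Matrix.mul_assoc, Mmat_mul_Smat]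
    simp only [Matrix.mul_assoc, Mmat_mul_qjMat hz]

lemma Mmat_isHermitian (lam : ℝ) (L : ℕ) : (Mmat (lam : ℂ) L).IsHermitian := by
  rw [Mmat_eq_diagonal, Matrix.isHermitian_diagonal_iff]
  intro s
  rw [IsSelfAdjoint, star_prod]
  refine Finset.prod_congr rfl fun j _ => ?_
  unfold mWeight
  split_ifs <;> simp [Complex.conj_ofReal]

lemma Mop_isSymmetric (lam : ℝ) (L : ℕ) : (Mop (lam : ℂ) L).IsSymmetric :=
  Matrix.isSymmetric_toEuclideanLin_iff.mpr (Mmat_isHermitian lam L)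

lemma W_mem_invtSubmodule_Mop (lam : ℂ) (L : ℕ) :
    W L ∈ Module.End.invtSubmodule (Mop lam L) := by
  refine Module.End.mapsTo_genEigenspace_of_comm ?_ _ 1
  simp only [Commute, SemiconjBy, Module.End.mul_eq_comp, Sop, Mop, ← Matrix.toLpLin_mul_same,
    Mmat_mul_Smat]

theorem Mop_comp_Qsc {lam ζ ζ' : ℝ} (hz : ζ = ζ' * lam ^ 2) (L : ℕ) :
    Mop (lam : ℂ) (L + 1) ∘ₗ Qsc ζ' L = Qsc ζ L ∘ₗ Mop (lam : ℂ) L := by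
  have hQ : Mop (lam : ℂ) (L + 1) ∘ₗ Matrix.toEuclideanLin (QsumMat ζ' L) =
      Matrix.toEuclideanLin (QsumMat ζ L) ∘ₗ Mop (lam : ℂ) L := by
    rw [Mop, Mop, ← Matrix.toLpLin_mul_same, ← Matrix.toLpLin_mul_same,
      Mmat_mul_QsumMat (ζ := ζ) (ζ' := ζ') (lam := lam) (by exact_mod_cast hz)]
  have hP : Mop (lam : ℂ) L ∘ₗ ((W L).starProjection : V L →ₗ[ℂ] V L) =
      ((W L).starProjection : V L →ₗ[ℂ] V L) ∘ₗ Mop (lam : ℂ) L :=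
    (Mop_isSymmetric lam L).comp_starProjection (W_mem_invtSubmodule_Mop _ L)
  simp only [Qsc, LinearMap.comp_smul, LinearMap.smul_comp]
  congr 1
  change _ ∘ₗ (_ ∘ₗ ((W L).starProjection : V L →ₗ[ℂ] V L)) =
    (_ ∘ₗ ((W L).starProjection : V L →ₗ[ℂ] V L)) ∘ₗ _
  rw [← LinearMap.comp_assoc, hQ, LinearMap.comp_assoc, hP, LinearMap.comp_assoc]

theorem Mop_comp_Qadj {lam ζ ζ' : ℝ} (hz : ζ = ζ' * lam ^ 2) (L : ℕ) :
    Mop (lam : ℂ) L ∘ₗ Qadj ζ (L + 1) = Qadj ζ' (L + 1) ∘ₗ Mop (lam : ℂ) (L + 1) := by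
  have h := congrArg LinearMap.adjoint (Mop_comp_Qsc hz L)
  rw [LinearMap.adjoint_comp, LinearMap.adjoint_comp, (Mop_isSymmetric lam _).adjoint_eq,
    (Mop_isSymmetric lam _).adjoint_eq] at h
  exact h.symm

theorem statement15_general (ζ lam : ℝ) (hlam : lam ≠ 0) (L : ℕ) :
    Mop (lam : ℂ) (L + 1) ∘ₗ Qsc (ζ / lam ^ 2) L = Qsc ζ L ∘ₗ Mop (lam : ℂ) L ∧
    Mop ((lam : ℂ))⁻¹ L ∘ₗ Qadj (ζ / lam ^ 2) (L + 1) =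
      Qadj ζ (L + 1) ∘ₗ Mop ((lam : ℂ))⁻¹ (L + 1) := by
  refine ⟨Mop_comp_Qsc (by field_simp) L, ?_⟩
  have h := Mop_comp_Qadj (lam := lam⁻¹) (ζ := ζ / lam ^ 2) (ζ' := ζ) (by ring) L
  push_cast at h
  exact h

/-- equation (2.33).  For nonzero real `ζ`, `λ` the conjugation
relations `M(λ) Q(λ⁻²ζ) = Q(ζ) M(λ)` and `M(λ⁻¹) Q(λ⁻²ζ)† = Q(ζ)† M(λ⁻¹)` hold. -/
theorem statement15 (ζ lam : ℝ) (hζ : ζ ≠ 0) (hlam : lam ≠ 0) (L : ℕ) (hL : 1 ≤ L) :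
    Mop (lam : ℂ) (L + 1) ∘ₗ Qsc (ζ / lam ^ 2) L = Qsc ζ L ∘ₗ Mop (lam : ℂ) L ∧
    Mop ((lam : ℂ))⁻¹ L ∘ₗ Qadj (ζ / lam ^ 2) (L + 1) =
      Qadj ζ (L + 1) ∘ₗ Mop ((lam : ℂ))⁻¹ (L + 1) :=
  statement15_general ζ lam hlam L

end EightVertex
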